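/- Let Ω, ∂Ω, σ, n be as in the context, and let u, v : ℝ^d → ℝ be C² on a neighborhood of the closure of Ω and satisfy −Δu = E·u and −Δv = E·v on Ω with the same energy E ∈ ℝ. Then 2E·∫_Ω u(x)·v(x) dx = ∫_{∂Ω} [ ((d−2)/2)(⟨n(x),∇u(x)⟩v(x) + ⟨n(x),∇v(x)⟩u(x)) + ⟨x,n(x)⟩(E·u(x)v(x) − ⟨∇u(x),∇v(x)⟩) + ⟨x,∇u(x)⟩⟨n(x),∇v(x)⟩ + ⟨x,∇v(x)⟩⟨n(x),∇u(x)⟩ ] dσ(x). -/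

import Mathlib

/-! The proof is the Pohozaev–Rellich argument. The vector field
`P = ((d-2)/2)(v∇u + u∇v) + ⟨x,∇u⟩∇v + ⟨x,∇v⟩∇u + (E uv - ⟨∇u,∇v⟩) x`
has divergence `((d-2)/2)(vΔu + uΔv) + d E uv + ⟨x,∇u⟩(Δv + Ev) + ⟨x,∇v⟩(Δu + Eu)`: the terms
with second derivatives cancel by the symmetry of the Hessians. For two solutions of
`-Δw = E w` this divergence is `2E uv`, and the Gauss–Green formula applied to `P` gives the
identity, the boundary integrand being `⟨P, n⟩`. -/

open MeasureTheory
open scoped RealInnerProductSpace Classical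

noncomputable section

/-- The Euclidean Laplacian: the sum of the second partial derivatives. -/
def lap {d : ℕ} (u : EuclideanSpace ℝ (Fin d) → ℝ) (x : EuclideanSpace ℝ (Fin d)) : ℝ :=
  ∑ i, fderiv ℝ (fun y => fderiv ℝ u y (EuclideanSpace.single i (1:ℝ))) x
    (EuclideanSpace.single i (1:ℝ))

/-- The divergence: the sum of the partial derivatives of the components. -/
def divg {d : ℕ} (F : EuclideanSpace ℝ (Fin d) → EuclideanSpace ℝ (Fin d))
    (x : EuclideanSpace ℝ (Fin d)) : ℝ :=
  ∑ i, fderiv ℝ (fun y => ⟪F y, EuclideanSpace.single i (1:ℝ)⟫) x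
    (EuclideanSpace.single i (1:ℝ))

open InnerProductSpace
open scoped Gradient

section Gradient

variable {F : Type*} [NormedAddCommGroup F] [InnerProductSpace ℝ F] [CompleteSpace F]

theorem inner_fderiv_gradient (u : F → ℝ) (x a b : F) :
    ⟪fderiv ℝ (∇ u) x a, b⟫ = fderiv ℝ (fderiv ℝ u) x a b := by
  have : ∇ u = (toDual ℝ F).symm ∘ fderiv ℝ u := rfl
  rw [this, LinearIsometryEquiv.comp_fderiv]
  exact toDual_symm_apply

theorem inner_fderiv_gradient_comm {u : F → ℝ} {x : F} (hu : ContDiffAt ℝ 2 u x) (a b : F) :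
    ⟪fderiv ℝ (∇ u) x a, b⟫ = ⟪fderiv ℝ (∇ u) x b, a⟫ := by
  rw [inner_fderiv_gradient, inner_fderiv_gradient]
  exact hu.isSymmSndFDerivAt (by simp) a b

theorem ContDiffAt.gradient {n : WithTop ℕ∞} {u : F → ℝ} {x : F}
    (hu : ContDiffAt ℝ (n + 1) u x) : ContDiffAt ℝ n (∇ u) x :=
  (toDual ℝ F).symm.contDiff.contDiffAt.comp x (hu.fderiv_right le_rfl)

theorem ContDiffOn.gradient {n : WithTop ℕ∞} {u : F → ℝ} {U : Set F} (hU : IsOpen U)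
    (hu : ContDiffOn ℝ (n + 1) u U) : ContDiffOn ℝ n (∇ u) U :=
  (toDual ℝ F).symm.contDiff.comp_contDiffOn (hu.fderiv_of_isOpen hU le_rfl)

end Gradient

section Euclidean

variable {d : ℕ}

local notation "ℝᵈ" => EuclideanSpace ℝ (Fin d)
local notation "𝐞" i => EuclideanSpace.single i (1 : ℝ)

theorem divg_eq_sum_fderiv {F : ℝᵈ → ℝᵈ} {x : ℝᵈ} (hF : DifferentiableAt ℝ F x) :
    divg F x = ∑ i, fderiv ℝ F x (𝐞 i) i := by
  refine Finset.sum_congr rfl fun i _ => ?_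
  rw [fderiv_inner_apply ℝ hF (differentiableAt_const _)]
  simp [EuclideanSpace.inner_single_right]

theorem lap_eq_divg_gradient (u : ℝᵈ → ℝ) (x : ℝᵈ) : lap u x = divg (∇ u) x := by
  simp only [lap, divg, inner_gradient_left]

theorem divg_add {F G : ℝᵈ → ℝᵈ} {x : ℝᵈ} (hF : DifferentiableAt ℝ F x)
    (hG : DifferentiableAt ℝ G x) : divg (fun y => F y + G y) x = divg F x + divg G x := by
  rw [divg_eq_sum_fderiv (F := fun y => F y + G y) (hF.add hG), divg_eq_sum_fderiv hF,
    divg_eq_sum_fderiv hG, fderiv_fun_add hF hG, ← Finset.sum_add_distrib]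
  simp

theorem divg_const_smul {F : ℝᵈ → ℝᵈ} {x : ℝᵈ} (hF : DifferentiableAt ℝ F x) (c : ℝ) :
    divg (fun y => c • F y) x = c * divg F x := by
  rw [divg_eq_sum_fderiv (F := fun y => c • F y) (hF.const_smul c), divg_eq_sum_fderiv hF,
    fderiv_fun_const_smul hF, Finset.mul_sum]
  simp

theorem divg_smul {f : ℝᵈ → ℝ} {F : ℝᵈ → ℝᵈ} {x : ℝᵈ} (hf : DifferentiableAt ℝ f x)
    (hF : DifferentiableAt ℝ F x) :
    divg (fun y => f y • F y) x = fderiv ℝ f x (F x) + f x * divg F x := by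
  rw [divg_eq_sum_fderiv (F := fun y => f y • F y) (hf.smul hF), divg_eq_sum_fderiv hF,
    fderiv_fun_smul hf hF, Finset.mul_sum]
  have : fderiv ℝ f x (F x) = ∑ i, F x i * fderiv ℝ f x (𝐞 i) := by
    conv_lhs => rw [← (EuclideanSpace.basisFun (Fin d) ℝ).sum_repr (F x)]
    simp
  simp [this, Finset.sum_add_distrib, mul_comm, add_comm]

theorem divg_id' (x : ℝᵈ) : divg (fun y => y) x = d := by
  rw [divg_eq_sum_fderiv differentiableAt_fun_id]
  simp

attribute [local fun_prop] DifferentiableAt.inner ContDiffOn.inner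

def pohozaevField (u v : ℝᵈ → ℝ) (E : ℝ) (y : ℝᵈ) : ℝᵈ :=
  (((d : ℝ) - 2) / 2) • (v y • ∇ u y + u y • ∇ v y)
    + (⟪y, ∇ u y⟫ • ∇ v y + ⟪y, ∇ v y⟫ • ∇ u y)
    + (E * u y * v y - ⟪∇ u y, ∇ v y⟫) • y

theorem divg_pohozaevField {u v : ℝᵈ → ℝ} {x : ℝᵈ} (hu : ContDiffAt ℝ 2 u x)
    (hv : ContDiffAt ℝ 2 v x) (E : ℝ) :
    divg (pohozaevField u v E) x
      = ((d : ℝ) - 2) / 2 * (v x * lap u x + u x * lap v x) + d * E * u x * v x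
        + ⟪x, ∇ u x⟫ * (lap v x + E * v x) + ⟪x, ∇ v x⟫ * (lap u x + E * u x) := by
  have du : DifferentiableAt ℝ u x := hu.differentiableAt two_ne_zero
  have dv : DifferentiableAt ℝ v x := hv.differentiableAt two_ne_zero
  have dgu : DifferentiableAt ℝ (∇ u) x := (hu.gradient (n := 1)).differentiableAt one_ne_zero
  have dgv : DifferentiableAt ℝ (∇ v) x := (hv.gradient (n := 1)).differentiableAt one_ne_zero
  have dEuv : DifferentiableAt ℝ (fun y => E * u y * v y) x := by fun_prop
  unfold pohozaevField
  rw [divg_add (by fun_prop) (by fun_prop), divg_add (by fun_prop) (by fun_prop),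
    divg_const_smul (by fun_prop), divg_add (by fun_prop) (by fun_prop),
    divg_add (by fun_prop) (by fun_prop), divg_smul (by fun_prop) (by fun_prop),
    divg_smul (by fun_prop) (by fun_prop), divg_smul (by fun_prop) (by fun_prop),
    divg_smul (by fun_prop) (by fun_prop), divg_smul (by fun_prop) (by fun_prop), divg_id',
    ← lap_eq_divg_gradient, ← lap_eq_divg_gradient]
  simp only [fderiv_inner_apply ℝ differentiableAt_fun_id dgu,
    fderiv_inner_apply ℝ differentiableAt_fun_id dgv, fderiv_fun_sub dEuv (dgu.inner ℝ dgv),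
    fderiv_fun_mul (du.const_mul E) dv, fderiv_const_mul du, fderiv_inner_apply ℝ dgu dgv,
    fderiv_fun_id, sub_apply, add_apply, smul_apply, ContinuousLinearMap.id_apply,
    ← inner_gradient_left, smul_eq_mul]
  have symm_u : ⟪fderiv ℝ (∇ u) x x, ∇ v x⟫ = ⟪x, fderiv ℝ (∇ u) x (∇ v x)⟫ := by
    rw [inner_fderiv_gradient_comm hu, real_inner_comm]
  have symm_v : ⟪∇ u x, fderiv ℝ (∇ v) x x⟫ = ⟪x, fderiv ℝ (∇ v) x (∇ u x)⟫ := by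
    rw [real_inner_comm, inner_fderiv_gradient_comm hv, real_inner_comm]
  rw [symm_u, symm_v, real_inner_comm (∇ u x) (∇ v x), real_inner_comm x (∇ u x),
    real_inner_comm x (∇ v x)]
  ring

theorem divg_pohozaevField_of_eigen {u v : ℝᵈ → ℝ} {x : ℝᵈ} {E : ℝ}
    (hu : ContDiffAt ℝ 2 u x) (hv : ContDiffAt ℝ 2 v x)
    (hEu : -lap u x = E * u x) (hEv : -lap v x = E * v x) :
    divg (pohozaevField u v E) x = 2 * E * (u x * v x) := by
  rw [divg_pohozaevField hu hv]
  linear_combination (-(((d : ℝ) - 2) / 2 * v x) - ⟪x, ∇ v x⟫) * hEu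
    + (-(((d : ℝ) - 2) / 2 * u x) - ⟪x, ∇ u x⟫) * hEv

theorem contDiffOn_pohozaevField {u v : ℝᵈ → ℝ} {U : Set ℝᵈ} (hU : IsOpen U)
    (hu : ContDiffOn ℝ 2 u U) (hv : ContDiffOn ℝ 2 v U) (E : ℝ) :
    ContDiffOn ℝ 1 (pohozaevField u v E) U := by
  have hgu : ContDiffOn ℝ 1 (∇ u) U := hu.gradient (n := 1) hU
  have hgv : ContDiffOn ℝ 1 (∇ v) U := hv.gradient (n := 1) hU
  have hu1 : ContDiffOn ℝ 1 u U := hu.of_le one_le_two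
  have hv1 : ContDiffOn ℝ 1 v U := hv.of_le one_le_two
  unfold pohozaevField
  fun_prop

theorem inner_pohozaevField (u v : ℝᵈ → ℝ) (E : ℝ) (y c : ℝᵈ) :
    ⟪pohozaevField u v E y, c⟫
      = ((d : ℝ) - 2) / 2 * (⟪c, ∇ u y⟫ * v y + ⟪c, ∇ v y⟫ * u y)
        + ⟪y, c⟫ * (E * u y * v y - ⟪∇ u y, ∇ v y⟫)
        + ⟪y, ∇ u y⟫ * ⟪c, ∇ v y⟫ + ⟪y, ∇ v y⟫ * ⟪c, ∇ u y⟫ := by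
  rw [real_inner_comm]
  simp only [pohozaevField, inner_add_right, real_inner_smul_right]
  rw [real_inner_comm y c]
  ring

end Euclidean
theorem boundary_identity_equal_energies_general
    (d : ℕ) (Ω : Set (EuclideanSpace ℝ (Fin d)))
    (hΩo : IsOpen Ω)
    (n : EuclideanSpace ℝ (Fin d) → EuclideanSpace ℝ (Fin d))
    (hGG : ∀ F : EuclideanSpace ℝ (Fin d) → EuclideanSpace ℝ (Fin d),
      (∃ U, IsOpen U ∧ closure Ω ⊆ U ∧ ContDiffOn ℝ 1 F U) →
      (∫ x in Ω, divg F x) = ∫ x in frontier Ω, ⟪F x, n x⟫ ∂(μH[(d:ℝ) - 1]))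
    (u v : EuclideanSpace ℝ (Fin d) → ℝ) (En : ℝ)
    (hur : ∃ U, IsOpen U ∧ closure Ω ⊆ U ∧ ContDiffOn ℝ 2 u U) (hvr : ∃ U, IsOpen U ∧ closure Ω ⊆ U ∧ ContDiffOn ℝ 2 v U)
    (hHu : ∀ x ∈ Ω, -lap u x = En * u x) (hHv : ∀ x ∈ Ω, -lap v x = En * v x) :
    2 * En * (∫ x in Ω, u x * v x)
      = ∫ x in frontier Ω,
          (((d : ℝ) - 2) / 2 * (⟪n x, gradient u x⟫ * v x + ⟪n x, gradient v x⟫ * u x)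
            + ⟪x, n x⟫ * (En * u x * v x - ⟪gradient u x, gradient v x⟫)
            + ⟪x, gradient u x⟫ * ⟪n x, gradient v x⟫
            + ⟪x, gradient v x⟫ * ⟪n x, gradient u x⟫) ∂(μH[(d:ℝ) - 1]) := by
  obtain ⟨U, hU, hΩU, hu⟩ := hur
  obtain ⟨V, hV, hΩV, hv⟩ := hvr
  have hP : ContDiffOn ℝ 1 (pohozaevField u v En) (U ∩ V) :=
    contDiffOn_pohozaevField (hU.inter hV) (hu.mono Set.inter_subset_left)
      (hv.mono Set.inter_subset_right) En
  have hdiv : ∀ x ∈ Ω, divg (pohozaevField u v En) x = 2 * En * (u x * v x) := fun x hx =>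
    divg_pohozaevField_of_eigen (hu.contDiffAt (hU.mem_nhds (hΩU (subset_closure hx))))
      (hv.contDiffAt (hV.mem_nhds (hΩV (subset_closure hx)))) (hHu x hx) (hHv x hx)
  calc 2 * En * (∫ x in Ω, u x * v x)
      = ∫ x in Ω, divg (pohozaevField u v En) x := by
        rw [← integral_const_mul]
        exact setIntegral_congr_fun hΩo.measurableSet fun x hx => (hdiv x hx).symm
    _ = ∫ x in frontier Ω, ⟪pohozaevField u v En x, n x⟫ ∂(μH[(d:ℝ) - 1]) :=
        hGG _ ⟨U ∩ V, hU.inter hV, Set.subset_inter hΩU hΩV, hP⟩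
    _ = _ := by simp only [inner_pohozaevField]

theorem boundary_identity_equal_energies
    (d : ℕ) (hd : 2 ≤ d) (Ω : Set (EuclideanSpace ℝ (Fin d)))
    (hΩo : IsOpen Ω) (hΩb : Bornology.IsBounded Ω)
    (n : EuclideanSpace ℝ (Fin d) → EuclideanSpace ℝ (Fin d))
    (hGG : ∀ F : EuclideanSpace ℝ (Fin d) → EuclideanSpace ℝ (Fin d),
      (∃ U, IsOpen U ∧ closure Ω ⊆ U ∧ ContDiffOn ℝ 1 F U) →
      (∫ x in Ω, divg F x) = ∫ x in frontier Ω, ⟪F x, n x⟫ ∂(μH[(d:ℝ) - 1]))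
    (u v : EuclideanSpace ℝ (Fin d) → ℝ) (En : ℝ)
    (hur : ∃ U, IsOpen U ∧ closure Ω ⊆ U ∧ ContDiffOn ℝ 2 u U) (hvr : ∃ U, IsOpen U ∧ closure Ω ⊆ U ∧ ContDiffOn ℝ 2 v U)
    (hHu : ∀ x ∈ Ω, -lap u x = En * u x) (hHv : ∀ x ∈ Ω, -lap v x = En * v x) :
    2 * En * (∫ x in Ω, u x * v x)
      = ∫ x in frontier Ω,
          (((d : ℝ) - 2) / 2 * (⟪n x, gradient u x⟫ * v x + ⟪n x, gradient v x⟫ * u x)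
            + ⟪x, n x⟫ * (En * u x * v x - ⟪gradient u x, gradient v x⟫)
            + ⟪x, gradient u x⟫ * ⟪n x, gradient v x⟫
            + ⟪x, gradient v x⟫ * ⟪n x, gradient u x⟫) ∂(μH[(d:ℝ) - 1]) :=
  boundary_identity_equal_energies_general d Ω hΩo n hGG u v En hur hvr hHu hHv
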